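/- For any unit vector θ in R^d, the integral over the unit sphere (with respect to the uniform probability measure) of the function q ↦ 1{⟨θ,q⟩ ≥ 0}·q equals c_d·θ, where c_d = Γ(d/2)/(2√π·Γ((d+1)/2)). -/

import Mathlib

/-!
Integrate `x ↦ exp (-‖x‖²) • 1{⟪θ, x⟫ ≥ 0} • x` over `ℝ^d` in two ways. In polar coordinates it
factors as `Γ((d+1)/2)/2` times the unnormalised sphere integral. Alternatively, rotating `θ` to
a coordinate vector, Fubini splits it into one-dimensional Gaussian moments, giving
`(√π^(d-1)/2) • θ`. Dividing by the surface area `d π^(d/2) / Γ(d/2 + 1)` yields `c_d`.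
-/

open MeasureTheory Metric Real Set Module

noncomputable def uniformSphere (d : ℕ) :
    Measure (sphere (0 : EuclideanSpace ℝ (Fin d)) 1) :=
  ((volume : Measure (EuclideanSpace ℝ (Fin d))).toSphere Set.univ)⁻¹ •
    (volume : Measure (EuclideanSpace ℝ (Fin d))).toSphere

lemma integral_exp_neg_sq : ∫ t : ℝ, exp (-t ^ 2) = √π := by
  simpa using integral_gaussian 1

lemma integral_mul_exp_neg_sq : ∫ t : ℝ, t * exp (-t ^ 2) = 0 := by
  have h := integral_neg_eq_self (fun t : ℝ => t * exp (-t ^ 2)) volume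
  simp only [neg_sq, neg_mul, integral_neg] at h
  linarith

lemma integral_Ioi_pow_mul_exp_neg_sq (n : ℕ) :
    ∫ t in Ioi (0 : ℝ), t ^ n * exp (-t ^ 2) = Gamma ((n + 1) / 2) / 2 := by
  have h := integral_rpow_mul_exp_neg_rpow two_pos
    (by linarith [n.cast_nonneg (α := ℝ)] : (-1 : ℝ) < n)
  simp only [rpow_natCast, rpow_two] at h
  rw [h]; ring

lemma integral_indicator_Ici_one_mul (g : ℝ → ℝ) :
    ∫ t, (Ici 0).indicator 1 t * g t = ∫ t in Ioi (0 : ℝ), g t := by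
  simp_rw [← indicator_mul_left, Pi.one_apply, one_mul]
  rw [integral_indicator measurableSet_Ici, integral_Ici_eq_integral_Ioi]

namespace EuclideanSpace

variable {ι : Type*} [Fintype ι]

theorem integral_prod_apply (f : ι → ℝ → ℝ) :
    ∫ y : EuclideanSpace ℝ ι, ∏ k, f k (y k) = ∏ k, ∫ t, f k t := by
  rw [← integral_fintype_prod_volume_eq_prod,
    ← (volume_preserving_symm_measurableEquiv_toLp ι).integral_comp']
  rfl

theorem integrable_prod_apply {f : ι → ℝ → ℝ} (hf : ∀ k, Integrable (f k)) :
    Integrable fun y : EuclideanSpace ℝ ι => ∏ k, f k (y k) :=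
  ((volume_preserving_symm_measurableEquiv_toLp ι).integrable_comp_emb
    (MeasurableEquiv.measurableEmbedding _)).2 (Integrable.fintype_prod hf)

theorem integral_exp_neg_norm_sq_smul_halfspace [DecidableEq ι] (i : ι) :
    ∫ y : EuclideanSpace ℝ ι, exp (-‖y‖ ^ 2) • (if 0 ≤ y i then y else 0) =
      (√π ^ (Fintype.card ι - 1) / 2) • single i 1 := by
  set f : ι → ι → ℝ → ℝ := fun j k t =>
    (if k = i then (Ici 0).indicator 1 t else 1) * ((if k = j then t else 1) * exp (-t ^ 2))
  have hprod : ∀ j (y : EuclideanSpace ℝ ι),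
      ∏ k, f j k (y k) = (exp (-‖y‖ ^ 2) • (if 0 ≤ y i then y else 0)) j := by
    intro j y
    simp only [f, Finset.prod_mul_distrib, Finset.prod_ite_eq', Finset.mem_univ, if_true,
      ← exp_sum, Finset.sum_neg_distrib, real_norm_sq_eq]
    by_cases hy : 0 ≤ y i <;> simp [hy, mul_comm]
  have hint : ∀ j k, Integrable (f j k) := by
    intro j k
    have hg : Integrable fun t : ℝ => (if k = j then t else 1) * exp (-t ^ 2) := by
      split_ifs
      · simpa using integrable_mul_exp_neg_mul_sq one_pos
      · simpa using integrable_exp_neg_mul_sq one_pos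
    rcases eq_or_ne k i with rfl | hki
    · refine (hg.indicator (measurableSet_Ici (a := 0))).congr (.of_forall fun t => ?_)
      by_cases ht : 0 ≤ t <;> simp [f, indicator_apply, ht]
    · simpa [f, hki] using hg
  have hval : ∀ j k, ∫ t, f j k t =
      if k = i then (if k = j then 1 / 2 else √π / 2) else (if k = j then 0 else √π) := by
    intro j k
    rcases eq_or_ne k i with rfl | hki <;> rcases eq_or_ne k j with rfl | hkj
    · simpa [f, integral_indicator_Ici_one_mul] using integral_Ioi_pow_mul_exp_neg_sq 1
    · have h := integral_Ioi_pow_mul_exp_neg_sq 0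
      norm_num [Gamma_one_half_eq] at h
      simpa [f, hkj, integral_indicator_Ici_one_mul] using h
    · simpa [f, hki] using integral_mul_exp_neg_sq
    · simpa [f, hki, hkj] using integral_exp_neg_sq
  ext j
  rw [eval_integral_piLp (fun j => by simpa only [hprod] using integrable_prod_apply (hint j))]
  simp_rw [← hprod, integral_prod_apply, hval]
  by_cases hji : j = i
  · subst hji
    simp +contextual [Finset.prod_ite, Finset.filter_ne', Finset.filter_eq', div_eq_inv_mul]
  · rw [Finset.prod_eq_zero (Finset.mem_univ j) (by simp [hji])]
    simp [hji]

end EuclideanSpace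

theorem MeasureTheory.Measure.integral_volumeIoiPow {F : Type*} [NormedAddCommGroup F]
    [NormedSpace ℝ F] (n : ℕ) (φ : ℝ → F) :
    ∫ r, φ r ∂Measure.volumeIoiPow n = ∫ r in Ioi (0 : ℝ), r ^ n • φ r := by
  simp only [Measure.volumeIoiPow, ENNReal.ofReal]
  rw [integral_withDensity_eq_integral_smul
      ((measurable_subtype_coe.pow_const _).real_toNNReal) _,
    integral_subtype_comap measurableSet_Ioi fun r ↦ Real.toNNReal (r ^ n) • φ r]
  refine setIntegral_congr_fun measurableSet_Ioi fun r hr ↦ ?_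
  rw [NNReal.smul_def, Real.coe_toNNReal _ (pow_nonneg hr.out.le _)]

section Polar

variable {E F : Type*} [NormedAddCommGroup E] [NormedSpace ℝ E] [FiniteDimensional ℝ E]
  [MeasurableSpace E] [BorelSpace E] [Nontrivial E] [NormedAddCommGroup F] [NormedSpace ℝ F]

theorem integral_smul_comp_normalize_addHaar (μ : Measure E) [μ.IsAddHaarMeasure]
    (φ : ℝ → ℝ) (f : E → F) :
    ∫ x, φ ‖x‖ • f (‖x‖⁻¹ • x) ∂μ =
      (∫ r in Ioi (0 : ℝ), r ^ (finrank ℝ E - 1) * φ r) • ∫ q : sphere (0 : E) 1, f q ∂μ.toSphere :=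
  calc ∫ x, φ ‖x‖ • f (‖x‖⁻¹ • x) ∂μ
      = ∫ x : ({0}ᶜ : Set E), φ ‖x.1‖ • f (‖x.1‖⁻¹ • x.1) ∂μ.comap (↑) := by
        rw [integral_subtype_comap (measurableSet_singleton _).compl
          fun x ↦ φ ‖x‖ • f (‖x‖⁻¹ • x), restrict_compl_singleton]
    _ = ∫ z, φ z.2 • f z.1 ∂μ.toSphere.prod (.volumeIoiPow (finrank ℝ E - 1)) := by
        simpa using μ.measurePreserving_homeomorphUnitSphereProd.integral_comp
          (Homeomorph.measurableEmbedding _) fun z ↦ φ z.2 • f z.1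
    _ = _ := by
        rw [← integral_prod_swap]
        simp only [Prod.fst_swap, Prod.snd_swap]
        rw [integral_prod_smul (fun r : Ioi (0 : ℝ) ↦ φ r) fun q : sphere (0 : E) 1 ↦ f q,
          Measure.integral_volumeIoiPow]
        rfl

end Polar

theorem nontrivial_of_norm_eq_one {E : Type*} [NormedAddCommGroup E] {θ : E} (hθ : ‖θ‖ = 1) :
    Nontrivial E :=
  nontrivial_of_ne θ 0 (norm_ne_zero_iff.1 (by simp [hθ]))

section InnerProductSpace

variable {E : Type*} [NormedAddCommGroup E] [InnerProductSpace ℝ E] [FiniteDimensional ℝ E]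

theorem exists_orthonormalBasis_apply_eq {ι : Type*} [Fintype ι]
    (hcard : finrank ℝ E = Fintype.card ι) {θ : E} (hθ : ‖θ‖ = 1) (i : ι) :
    ∃ b : OrthonormalBasis ι ℝ E, b i = θ := by
  have hv : Orthonormal ℝ (({i} : Set ι).domRestrict fun _ => θ) :=
    orthonormal_subsingleton_iff.2 fun _ => hθ
  obtain ⟨b, hb⟩ := hv.exists_orthonormalBasis_extension_of_card_eq hcard
  exact ⟨b, hb i rfl⟩

variable [MeasurableSpace E] [BorelSpace E]

theorem integral_exp_neg_norm_sq_smul_halfspace {θ : E} (hθ : ‖θ‖ = 1) :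
    ∫ x : E, exp (-‖x‖ ^ 2) • (if 0 ≤ inner ℝ θ x then x else 0) =
      (√π ^ (finrank ℝ E - 1) / 2) • θ := by
  have := nontrivial_of_norm_eq_one hθ
  let i₀ : Fin (finrank ℝ E) := ⟨0, finrank_pos⟩
  obtain ⟨b, hb⟩ := exists_orthonormalBasis_apply_eq (Fintype.card_fin _).symm hθ i₀
  set G : EuclideanSpace ℝ (Fin (finrank ℝ E)) → EuclideanSpace ℝ (Fin (finrank ℝ E)) :=
    fun y => exp (-‖y‖ ^ 2) • (if 0 ≤ y i₀ then y else 0)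
  have hG : ∀ x : E, exp (-‖x‖ ^ 2) • (if 0 ≤ inner ℝ θ x then x else 0) =
      b.repr.symm (G (b.repr x)) := by
    intro x
    simp only [G, ← hb, b.repr_apply_apply, LinearIsometryEquiv.norm_map]
    split_ifs <;> simp
  calc ∫ x : E, exp (-‖x‖ ^ 2) • (if 0 ≤ inner ℝ θ x then x else 0)
      = b.repr.symm (∫ x, G (b.repr x)) := by
        simp_rw [hG]
        exact b.repr.symm.toContinuousLinearEquiv.integral_comp_comm _
    _ = b.repr.symm (∫ y, G y) := by
        rw [b.measurePreserving_repr.integral_comp b.repr.toHomeomorph.measurableEmbedding]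
    _ = (√π ^ (finrank ℝ E - 1) / 2) • θ := by
        rw [EuclideanSpace.integral_exp_neg_norm_sq_smul_halfspace, Fintype.card_fin, map_smul,
          b.repr_symm_single, hb]

theorem integral_toSphere_halfspace {θ : E} (hθ : ‖θ‖ = 1) :
    ∫ q : sphere (0 : E) 1, (if 0 ≤ inner ℝ θ (q : E) then (q : E) else 0)
        ∂(volume : Measure E).toSphere =
      (√π ^ (finrank ℝ E - 1) / Gamma ((finrank ℝ E + 1) / 2)) • θ := by
  have := nontrivial_of_norm_eq_one hθ
  have hpolar := integral_smul_comp_normalize_addHaar (volume : Measure E)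
    (fun r ↦ r * exp (-r ^ 2)) fun x ↦ if 0 ≤ inner ℝ θ x then x else 0
  have hintegrand : ∀ x : E, (‖x‖ * exp (-‖x‖ ^ 2)) •
      (if 0 ≤ inner ℝ θ (‖x‖⁻¹ • x) then ‖x‖⁻¹ • x else 0) =
      exp (-‖x‖ ^ 2) • (if 0 ≤ inner ℝ θ x then x else 0) := by
    intro x
    rcases eq_or_ne x 0 with rfl | hx
    · simp
    have hx' : 0 < ‖x‖ := norm_pos_iff.2 hx
    simp only [real_inner_smul_right, mul_nonneg_iff_of_pos_left (inv_pos.2 hx')]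
    split_ifs
    · rw [smul_smul, mul_right_comm, mul_inv_cancel₀ hx'.ne', one_mul]
    · simp
  have hradial : ∫ r in Ioi (0 : ℝ), r ^ (finrank ℝ E - 1) * (r * exp (-r ^ 2)) =
      Gamma ((finrank ℝ E + 1) / 2) / 2 := by
    simp_rw [← mul_assoc, pow_sub_one_mul finrank_pos.ne']
    exact_mod_cast integral_Ioi_pow_mul_exp_neg_sq (finrank ℝ E)
  simp only [hintegrand, hradial, integral_exp_neg_norm_sq_smul_halfspace hθ] at hpolar
  rw [← inv_smul_eq_iff₀ (by positivity)] at hpolar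
  rw [← hpolar, smul_smul]
  congr 1
  field_simp

end InnerProductSpace

theorem stmt0_general (d : ℕ) (θ : EuclideanSpace ℝ (Fin d)) (hθ : ‖θ‖ = 1) :
    (∫ q : sphere (0 : EuclideanSpace ℝ (Fin d)) 1,
        (if (0 : ℝ) ≤ inner ℝ θ (q : EuclideanSpace ℝ (Fin d)) then
          (q : EuclideanSpace ℝ (Fin d)) else 0) ∂(uniformSphere d)) =
      (Real.Gamma ((d : ℝ) / 2) / (2 * Real.sqrt π * Real.Gamma (((d : ℝ) + 1) / 2))) • θ := by
  have := nontrivial_of_norm_eq_one hθ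
  have hd : 0 < d := by simpa using (finrank_pos : 0 < finrank ℝ (EuclideanSpace ℝ (Fin d)))
  rw [uniformSphere, integral_smul_measure, integral_toSphere_halfspace hθ, smul_smul,
    Measure.toSphere_apply_univ, InnerProductSpace.volume_ball, finrank_euclideanSpace_fin]
  congr 1
  rw [ENNReal.ofReal_one, one_pow, one_mul, ENNReal.toReal_inv, ENNReal.toReal_mul,
    ENNReal.toReal_natCast, ENNReal.toReal_ofReal (by positivity), Gamma_add_one (by positivity),
    ← pow_sub_one_mul hd.ne' √π]
  field_simp

/-- for a unit vector `θ ∈ ℝ^d`, the integral over the unit sphere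
(uniform probability measure) of `q ↦ 1{⟨θ,q⟩ ≥ 0} • q` equals `c_d • θ` with
`c_d = Γ(d/2) / (2√π · Γ((d+1)/2))`. -/
theorem stmt0 (d : ℕ) (hd : 2 ≤ d) (θ : EuclideanSpace ℝ (Fin d)) (hθ : ‖θ‖ = 1) :
    (∫ q : sphere (0 : EuclideanSpace ℝ (Fin d)) 1,
        (if (0 : ℝ) ≤ inner ℝ θ (q : EuclideanSpace ℝ (Fin d)) then
          (q : EuclideanSpace ℝ (Fin d)) else 0) ∂(uniformSphere d)) =
      (Real.Gamma ((d : ℝ) / 2) / (2 * Real.sqrt π * Real.Gamma (((d : ℝ) + 1) / 2))) • θ :=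
  stmt0_general d θ hθ
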